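/- Let Z ~ ESN₂(0, Ω̄, α, τ) in dimension 2, with Ω̄ having off-diagonal entry λ ∈ (−1,1), α = (α₁, α₂), δᵢ as in the context. Then E[Z₁Z₂] = λ + δ₁δ₂·(ζ₂(τ) + ζ₁(τ)²), where ζ₁(x) = φ(x)/Φ(x) and ζ₂(x) = −(xζ₁(x)+ζ₁(x)²). -/

import Mathlib

open MeasureTheory Real

noncomputable def phi (x : ℝ) : ℝ := (Real.sqrt (2 * Real.pi))⁻¹ * Real.exp (-x ^ 2 / 2)

noncomputable def Phi (x : ℝ) : ℝ := ∫ t in Set.Iic x, phi t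

noncomputable def zeta1 (x : ℝ) : ℝ := phi x / Phi x

noncomputable def zeta2 (x : ℝ) : ℝ := -(x * zeta1 x + (zeta1 x) ^ 2)

/-- Density of the bivariate `ESN₂(0, Ω̄, α, τ)` distribution, where `Ω̄ = [[1,λ],[λ,1]]`. -/
noncomputable def esn2Pdf (lam α₁ α₂ τ : ℝ) (z : ℝ × ℝ) : ℝ :=
  (2 * Real.pi * Real.sqrt (1 - lam ^ 2))⁻¹ *
    Real.exp (-(z.1 ^ 2 + z.2 ^ 2 - 2 * lam * z.1 * z.2) / (2 * (1 - lam ^ 2))) *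
    Phi (τ * Real.sqrt (1 + (α₁ ^ 2 + α₂ ^ 2 + 2 * α₁ * α₂ * lam)) + α₁ * z.1 + α₂ * z.2) /
    Phi τ

/-!
Conditionally on `Z₁ = x`, the Gaussian factor of the density makes `Z₂` normal with mean `λx` and
variance `1 - λ²`, so `E[Z₁Z₂]` is computed by integrating out `y` and then `x`. Every
one-dimensional integral that arises reduces, through Stein's identity `E[X g(X)] = E[g'(X)]`,
to `∫ φ(x) φ(p + qx) dx` (completing the square) and to `∫ φ(x) Φ(p + qx) dx = Φ(p / √(1 + q²))`;
the latter holds because both sides have the same derivative in `p` and vanish as `p → -∞`.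
-/

open Filter Topology ProbabilityTheory

lemma phi_eq_gaussianPDFReal : phi = gaussianPDFReal 0 1 := by
  ext x; simp [phi, gaussianPDFReal]

lemma phi_pos (x : ℝ) : 0 < phi x := by
  unfold phi; positivity

lemma phi_le_one (x : ℝ) : phi x ≤ 1 := by
  have h2π : 1 ≤ √(2 * π) := Real.one_le_sqrt.2 (by linarith [Real.pi_gt_three])
  have hexp : exp (-x ^ 2 / 2) ≤ 1 := Real.exp_le_one_iff.2 (by nlinarith)
  unfold phi
  calc (√(2 * π))⁻¹ * exp (-x ^ 2 / 2) ≤ 1 * 1 := by gcongr; exact inv_le_one_of_one_le₀ h2π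
    _ = 1 := one_mul 1

lemma abs_phi_le_one (x : ℝ) : |phi x| ≤ 1 := by
  rw [abs_of_pos (phi_pos x)]; exact phi_le_one x

lemma continuous_phi : Continuous phi := by
  unfold phi; fun_prop

lemma integrable_phi : Integrable phi :=
  phi_eq_gaussianPDFReal ▸ integrable_gaussianPDFReal 0 1

lemma integral_phi : ∫ x, phi x = 1 :=
  phi_eq_gaussianPDFReal ▸ integral_gaussianPDFReal_eq_one 0 one_ne_zero

lemma phi_eq_mul_exp (x : ℝ) : phi x = (√(2 * π))⁻¹ * exp (-(1 / 2) * x ^ 2) := by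
  unfold phi; ring_nf

lemma integrable_mul_phi : Integrable fun x => x * phi x := by
  refine ((integrable_mul_exp_neg_mul_sq (b := 1 / 2) (by norm_num)).const_mul
    (√(2 * π))⁻¹).congr (ae_of_all _ fun x => ?_)
  simp only [phi_eq_mul_exp]
  ring

lemma integrable_sq_mul_phi : Integrable fun x => x ^ 2 * phi x := by
  have := (integrable_rpow_mul_exp_neg_mul_sq (b := 1 / 2) (by norm_num)
    (s := 2) (by norm_num)).const_mul (√(2 * π))⁻¹
  refine this.congr (ae_of_all _ fun x => ?_)
  simp only [phi_eq_mul_exp, Real.rpow_two]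
  ring

lemma hasDerivAt_phi (x : ℝ) : HasDerivAt phi (-x * phi x) x := by
  have h : HasDerivAt (fun y : ℝ => -y ^ 2 / 2) (-x) x :=
    ((hasDerivAt_pow 2 x).neg.div_const 2).congr_deriv (by simp; ring)
  exact (h.exp.const_mul (√(2 * π))⁻¹).congr_deriv (by unfold phi; ring)

lemma Phi_eq_cdf (x : ℝ) : Phi x = cdf (gaussianReal 0 1) x := by
  rw [cdf_eq_real, measureReal_def, gaussianReal_apply_eq_integral 0 one_ne_zero,
    ENNReal.toReal_ofReal (setIntegral_nonneg measurableSet_Iic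
      fun t _ => gaussianPDFReal_nonneg 0 1 t), Phi, phi_eq_gaussianPDFReal]

lemma Phi_nonneg (x : ℝ) : 0 ≤ Phi x := Phi_eq_cdf x ▸ cdf_nonneg _ x

lemma Phi_le_one (x : ℝ) : Phi x ≤ 1 := Phi_eq_cdf x ▸ cdf_le_one _ x

lemma abs_Phi_le_one (x : ℝ) : |Phi x| ≤ 1 := by
  rw [abs_of_nonneg (Phi_nonneg x)]; exact Phi_le_one x

lemma tendsto_Phi_atBot : Tendsto Phi atBot (𝓝 0) := by
  simpa only [← funext Phi_eq_cdf] using tendsto_cdf_atBot (gaussianReal 0 1)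

lemma Phi_pos (x : ℝ) : 0 < Phi x := by
  rw [Phi, setIntegral_pos_iff_support_of_nonneg_ae
    (ae_of_all _ fun t => (phi_pos t).le) integrable_phi.integrableOn]
  have : Function.support phi = Set.univ := by
    ext t; simp [Function.support, (phi_pos t).ne']
  simp [this, Real.volume_Iic]

lemma hasDerivAt_Phi (x : ℝ) : HasDerivAt Phi (phi x) x := by
  have h : HasDerivAt (fun u => ∫ t in (0:ℝ)..u, phi t) (phi x) x :=
    intervalIntegral.integral_hasDerivAt_right integrable_phi.intervalIntegrable
      continuous_phi.aestronglyMeasurable.stronglyMeasurableAtFilter continuous_phi.continuousAt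
  have hPhi : Phi = fun u => Phi 0 + ∫ t in (0:ℝ)..u, phi t := by
    funext u
    rw [Phi, Phi, ← intervalIntegral.integral_Iic_sub_Iic integrable_phi.integrableOn
      integrable_phi.integrableOn]
    ring
  rw [hPhi]
  exact h.const_add _

lemma continuous_Phi : Continuous Phi :=
  continuous_iff_continuousAt.2 fun x => (hasDerivAt_Phi x).continuousAt

lemma integrable_of_abs_le_mul_phi {f : ℝ → ℝ} (hf : AEStronglyMeasurable f) {a b c : ℝ}
    (h : ∀ x, |f x| ≤ (a + b * |x| + c * x ^ 2) * phi x) : Integrable f := by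
  have habs : Integrable fun x => |x| * phi x := integrable_mul_phi.abs.congr
    (ae_of_all _ fun x => by simp only [abs_mul, abs_of_pos (phi_pos x)])
  have hdom : Integrable fun x => a * phi x + b * (|x| * phi x) + c * (x ^ 2 * phi x) :=
    ((integrable_phi.const_mul a).add (habs.const_mul b)).add (integrable_sq_mul_phi.const_mul c)
  refine hdom.mono' hf (ae_of_all _ fun x => ?_)
  rw [Real.norm_eq_abs]
  linarith [h x]

lemma integral_mul_phi_mul_eq_integral_phi_mul_deriv {g g' : ℝ → ℝ} {a b : ℝ}
    (hg : ∀ x, HasDerivAt g (g' x) x) (hg_le : ∀ x, |g x| ≤ a + b * |x|)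
    (hg'_le : ∀ x, |g' x| ≤ a + b * |x|) :
    ∫ x, x * phi x * g x = ∫ x, phi x * g' x := by
  have hgc : Continuous g := continuous_iff_continuousAt.2 fun x => (hg x).continuousAt
  have hg'm : Measurable g' := (funext fun x => (hg x).deriv : deriv g = g') ▸ measurable_deriv g
  have hφ := fun x => (phi_pos x).le
  have key := integral_mul_deriv_eq_deriv_mul_of_integrable (u := g) (v := phi) (u' := g')
    (v' := fun x => -x * phi x) (fun x _ => hg x) (fun x _ => hasDerivAt_phi x)
    (integrable_of_abs_le_mul_phi (a := 0) (b := a) (c := b)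
      (hgc.mul (continuous_id.neg.mul continuous_phi)).aestronglyMeasurable fun x => by
        simp only [Pi.mul_apply, abs_mul, abs_neg, abs_of_nonneg (hφ x)]
        rw [← sq_abs x]
        linear_combination mul_le_mul_of_nonneg_right (hg_le x)
          (mul_nonneg (abs_nonneg x) (hφ x)))
    (integrable_of_abs_le_mul_phi (a := a) (b := b) (c := 0)
      (hg'm.mul continuous_phi.measurable).aestronglyMeasurable fun x => by
        simp only [Pi.mul_apply, abs_mul, abs_of_nonneg (hφ x)]
        linear_combination mul_le_mul_of_nonneg_right (hg'_le x) (hφ x))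
    (integrable_of_abs_le_mul_phi (a := a) (b := b) (c := 0)
      (hgc.mul continuous_phi).aestronglyMeasurable fun x => by
        simp only [Pi.mul_apply, abs_mul, abs_of_nonneg (hφ x)]
        linear_combination mul_le_mul_of_nonneg_right (hg_le x) (hφ x))
  calc ∫ x, x * phi x * g x = -∫ x, g x * (-x * phi x) := by
        rw [← integral_neg]; congr 1; ext x; ring
    _ = ∫ x, phi x * g' x := by
        rw [key, neg_neg]; congr 1; ext x; ring

lemma hasDerivAt_comp_affine {f f' : ℝ → ℝ} (hf : ∀ x, HasDerivAt f (f' x) x) (p q x : ℝ) :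
    HasDerivAt (fun x => f (p + q * x)) (q * f' (p + q * x)) x :=
  ((hf _).comp x (((hasDerivAt_id x).const_mul q).const_add p)).congr_deriv (by simp [mul_comm])

lemma MeasureTheory.Integrable.mul_comp_affine {w f : ℝ → ℝ} (hw : Integrable w)
    (hf : Continuous f) (hf_le : ∀ x, |f x| ≤ 1) (p q : ℝ) :
    Integrable fun x => w x * f (p + q * x) := by
  refine hw.abs.mono' (hw.1.mul (hf.comp (by fun_prop)).aestronglyMeasurable)
    (ae_of_all _ fun x => ?_)
  rw [Real.norm_eq_abs, abs_mul]
  nlinarith [hf_le (p + q * x), abs_nonneg (w x)]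

lemma phi_mul_phi_affine (p q x : ℝ) :
    phi x * phi (p + q * x) =
      phi (p / √(1 + q ^ 2)) * phi (√(1 + q ^ 2) * x + p * q / √(1 + q ^ 2)) := by
  have hk2 : √(1 + q ^ 2) ^ 2 = 1 + q ^ 2 := Real.sq_sqrt (by positivity)
  simp only [phi, mul_mul_mul_comm _ (exp _), ← exp_add]
  congr 2
  field_simp
  linear_combination (x ^ 2 * √(1 + q ^ 2) ^ 2 - p ^ 2) * hk2

lemma integral_phi_comp_affine {k : ℝ} (hk : 0 < k) (c : ℝ) : ∫ x, phi (k * x + c) = k⁻¹ := by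
  rw [Measure.integral_comp_mul_left (fun y => phi (y + c)), integral_add_right_eq_self phi c,
    integral_phi, abs_of_pos (inv_pos.2 hk), smul_eq_mul, mul_one]

lemma integral_phi_mul_phi_affine (p q : ℝ) :
    ∫ x, phi x * phi (p + q * x) = (√(1 + q ^ 2))⁻¹ * phi (p / √(1 + q ^ 2)) := by
  simp_rw [phi_mul_phi_affine p q, integral_const_mul,
    integral_phi_comp_affine (Real.sqrt_pos.2 (by positivity : (0 : ℝ) < 1 + q ^ 2))]
  ring

lemma hasDerivAt_integral_phi_mul_Phi_affine (p q : ℝ) :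
    HasDerivAt (fun p => ∫ x, phi x * Phi (p + q * x)) (∫ x, phi x * phi (p + q * x)) p := by
  refine (hasDerivAt_integral_of_dominated_loc_of_deriv_le (bound := phi)
    (F := fun p x => phi x * Phi (p + q * x)) (F' := fun p x => phi x * phi (p + q * x))
    univ_mem (Eventually.of_forall fun p =>
      (integrable_phi.mul_comp_affine continuous_Phi abs_Phi_le_one p q).1)
    (integrable_phi.mul_comp_affine continuous_Phi abs_Phi_le_one p q)
    (integrable_phi.mul_comp_affine continuous_phi abs_phi_le_one p q).1
    (ae_of_all _ fun x p _ => ?_) integrable_phi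
    (ae_of_all _ fun x p _ => ((hasDerivAt_Phi _).comp p
      ((hasDerivAt_id p).add_const (q * x))).const_mul (phi x) |>.congr_deriv (by simp))).2
  rw [Real.norm_eq_abs, abs_mul, abs_of_pos (phi_pos x)]
  nlinarith [abs_phi_le_one (p + q * x), phi_pos x]

lemma tendsto_integral_phi_mul_Phi_affine_atBot (q : ℝ) :
    Tendsto (fun p => ∫ x, phi x * Phi (p + q * x)) atBot (𝓝 0) := by
  have h := tendsto_integral_filter_of_dominated_convergence (μ := volume) (l := atBot)
    (F := fun p x => phi x * Phi (p + q * x)) (f := fun _ => 0) phi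
    (Eventually.of_forall fun p =>
      (integrable_phi.mul_comp_affine continuous_Phi abs_Phi_le_one p q).1)
    (Eventually.of_forall fun p => ae_of_all _ fun x => by
      rw [Real.norm_eq_abs, abs_mul, abs_of_pos (phi_pos x)]
      nlinarith [abs_Phi_le_one (p + q * x), phi_pos x])
    integrable_phi
    (ae_of_all _ fun x => by
      simpa using (tendsto_Phi_atBot.comp
        (tendsto_atBot_add_const_right _ (q * x) tendsto_id)).const_mul (phi x))
  simpa using h

lemma eq_of_hasDerivAt_of_tendsto_sub_atBot {f g f' : ℝ → ℝ} (hf : ∀ x, HasDerivAt f (f' x) x)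
    (hg : ∀ x, HasDerivAt g (f' x) x) (h : Tendsto (f - g) atBot (𝓝 0)) : f = g := by
  have hderiv : ∀ x, HasDerivAt (f - g) 0 x := fun x => ((hf x).sub (hg x)).congr_deriv (sub_self _)
  have hconst : ∀ x y, (f - g) x = (f - g) y := is_const_of_deriv_eq_zero
    (fun x => (hderiv x).differentiableAt) (fun x => (hderiv x).deriv)
  funext x
  have hx : (f - g) x = 0 :=
    tendsto_nhds_unique (tendsto_const_nhds.congr fun y => hconst x y) h
  exact sub_eq_zero.1 hx

lemma integral_phi_mul_Phi_affine (p q : ℝ) :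
    ∫ x, phi x * Phi (p + q * x) = Phi (p / √(1 + q ^ 2)) := by
  have hk : 0 < √(1 + q ^ 2) := Real.sqrt_pos.2 (by positivity)
  have hdiv : ∀ p, HasDerivAt (fun p => p / √(1 + q ^ 2)) (√(1 + q ^ 2))⁻¹ p := fun p => by
    simpa using (hasDerivAt_id p).div_const √(1 + q ^ 2)
  refine congrFun (eq_of_hasDerivAt_of_tendsto_sub_atBot
    (g := fun p => Phi (p / √(1 + q ^ 2)))
    (fun p => integral_phi_mul_phi_affine p q ▸ hasDerivAt_integral_phi_mul_Phi_affine p q)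
    (fun p => ((hasDerivAt_Phi _).comp p (hdiv p)).congr_deriv (mul_comm _ _)) ?_) p
  have h := (tendsto_integral_phi_mul_Phi_affine_atBot q).sub
    (tendsto_Phi_atBot.comp (tendsto_id.atBot_div_const hk))
  rwa [sub_zero] at h

lemma integral_mul_phi_mul_Phi_affine (p q : ℝ) :
    ∫ x, x * phi x * Phi (p + q * x) = q / √(1 + q ^ 2) * phi (p / √(1 + q ^ 2)) := by
  rw [integral_mul_phi_mul_eq_integral_phi_mul_deriv (g' := fun x => q * phi (p + q * x))
    (a := 1 + |q|) (b := 0)]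
  · simp_rw [mul_left_comm _ q, integral_const_mul, integral_phi_mul_phi_affine]
    ring
  · exact hasDerivAt_comp_affine hasDerivAt_Phi p q
  · intro x
    nlinarith [abs_Phi_le_one (p + q * x), abs_nonneg q]
  · intro x
    rw [abs_mul]
    nlinarith [abs_phi_le_one (p + q * x), abs_nonneg q, abs_nonneg (phi (p + q * x))]

lemma integral_mul_phi_mul_phi_affine (p q : ℝ) :
    ∫ x, x * phi x * phi (p + q * x) =
      -(p * q / √(1 + q ^ 2) ^ 3) * phi (p / √(1 + q ^ 2)) := by
  have hk : 0 < √(1 + q ^ 2) := Real.sqrt_pos.2 (by positivity)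
  have hk2 : √(1 + q ^ 2) ^ 2 = 1 + q ^ 2 := Real.sq_sqrt (by positivity)
  have hstein := integral_mul_phi_mul_eq_integral_phi_mul_deriv
    (g := fun x => phi (p + q * x)) (g' := fun x => q * (-(p + q * x) * phi (p + q * x)))
    (a := 1 + |q| * |p|) (b := q ^ 2) (hasDerivAt_comp_affine hasDerivAt_phi p q)
    (fun x => by nlinarith [abs_phi_le_one (p + q * x), abs_nonneg q, abs_nonneg p, abs_nonneg x])
    (fun x => calc
      |q * (-(p + q * x) * phi (p + q * x))| = |q| * |p + q * x| * |phi (p + q * x)| := by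
        rw [abs_mul, abs_mul, abs_neg, mul_assoc]
      _ ≤ |q| * (|p| + |q| * |x|) * 1 := by
        gcongr
        · exact (abs_add_le _ _).trans_eq (by rw [abs_mul])
        · exact abs_phi_le_one _
      _ ≤ 1 + |q| * |p| + q ^ 2 * |x| := by
        rw [← sq_abs q]; linarith)
  beta_reduce at hstein
  -- Stein's identity expresses the integral in terms of itself.
  have hsplit : ∫ x, phi x * (q * (-(p + q * x) * phi (p + q * x))) =
      -(p * q) * (∫ x, phi x * phi (p + q * x)) - q ^ 2 * ∫ x, x * phi x * phi (p + q * x) := by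
    rw [← integral_const_mul (-(p * q)), ← integral_const_mul (q ^ 2), ← integral_sub
      ((integrable_phi.mul_comp_affine continuous_phi abs_phi_le_one p q).const_mul _)
      ((integrable_mul_phi.mul_comp_affine continuous_phi abs_phi_le_one p q).const_mul _)]
    congr 1; ext x; ring
  rw [hsplit, integral_phi_mul_phi_affine p q] at hstein
  generalize ∫ x, x * phi x * phi (p + q * x) = I at hstein ⊢
  generalize √(1 + q ^ 2) = k at hk hk2 hstein ⊢
  field_simp at hstein ⊢
  linear_combination hstein + I * k * hk2

lemma integral_sq_mul_phi_mul_Phi_affine (p q : ℝ) :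
    ∫ x, x ^ 2 * phi x * Phi (p + q * x) =
      Phi (p / √(1 + q ^ 2)) - p * q ^ 2 / √(1 + q ^ 2) ^ 3 * phi (p / √(1 + q ^ 2)) := by
  have hstein := integral_mul_phi_mul_eq_integral_phi_mul_deriv
    (g := fun x => x * Phi (p + q * x)) (g' := fun x => Phi (p + q * x) + x * (q * phi (p + q * x)))
    (a := 1) (b := 1 + |q|)
    (fun x => (hasDerivAt_id x).mul (hasDerivAt_comp_affine hasDerivAt_Phi p q x) |>.congr_deriv
      (by simp))
    (fun x => by
      rw [abs_mul]
      nlinarith [abs_Phi_le_one (p + q * x), abs_nonneg x, abs_nonneg q])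
    (fun x => by
      have := abs_add_le (Phi (p + q * x)) (x * (q * phi (p + q * x)))
      rw [abs_mul, abs_mul] at this
      nlinarith [abs_Phi_le_one (p + q * x), abs_phi_le_one (p + q * x), abs_nonneg x, abs_nonneg q,
        mul_nonneg (abs_nonneg x) (abs_nonneg q)])
  calc ∫ x, x ^ 2 * phi x * Phi (p + q * x) = ∫ x, x * phi x * (x * Phi (p + q * x)) := by
        congr 1; ext x; ring
    _ = ∫ x, phi x * (Phi (p + q * x) + x * (q * phi (p + q * x))) := hstein
    _ = (∫ x, phi x * Phi (p + q * x)) + q * ∫ x, x * phi x * phi (p + q * x) := by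
        rw [← integral_const_mul, ← integral_add
          (integrable_phi.mul_comp_affine continuous_Phi abs_Phi_le_one p q)
          ((integrable_mul_phi.mul_comp_affine continuous_phi abs_phi_le_one p q).const_mul q)]
        congr 1; ext x; ring
    _ = _ := by
        rw [integral_phi_mul_Phi_affine, integral_mul_phi_mul_phi_affine]; ring

lemma integral_mul_phi_mul_affine_combination (A B p q : ℝ) :
    ∫ x, x * phi x * (A * x * Phi (p + q * x) + B * phi (p + q * x)) =
      A * Phi (p / √(1 + q ^ 2)) -
        (A * q + B) * (p * q / √(1 + q ^ 2) ^ 3) * phi (p / √(1 + q ^ 2)) := by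
  simp_rw [show ∀ x, x * phi x * (A * x * Phi (p + q * x) + B * phi (p + q * x)) =
      A * (x ^ 2 * phi x * Phi (p + q * x)) + B * (x * phi x * phi (p + q * x)) from
    fun x => by ring]
  rw [integral_add
    ((integrable_sq_mul_phi.mul_comp_affine continuous_Phi abs_Phi_le_one _ _).const_mul _)
    ((integrable_mul_phi.mul_comp_affine continuous_phi
      abs_phi_le_one _ _).const_mul _),
    integral_const_mul, integral_const_mul, integral_sq_mul_phi_mul_Phi_affine,
    integral_mul_phi_mul_phi_affine]
  ring

lemma sqrt_one_add_div_sq {a k R : ℝ} (hk : 0 < k) (hR : 0 ≤ R) (h : R ^ 2 = k ^ 2 + a ^ 2) :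
    √(1 + (a / k) ^ 2) = R / k := by
  rw [← Real.sqrt_sq (div_nonneg hR hk.le), div_pow, div_pow, h]
  congr 1
  field_simp

lemma integral_comp_sub_div (f : ℝ → ℝ) (m : ℝ) {s : ℝ} (hs : 0 < s) :
    ∫ y, f ((y - m) / s) = s * ∫ v, f v := by
  rw [integral_sub_right_eq_self (fun y => f (y / s)) m, Measure.integral_comp_div,
    abs_of_pos hs, smul_eq_mul]

lemma integral_mul_scaled_phi_mul_Phi_affine (m d e : ℝ) {s : ℝ} (hs : 0 < s) :
    ∫ y, y * (s⁻¹ * phi ((y - m) / s)) * Phi (d + e * y) =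
      m * Phi ((d + e * m) / √(1 + (e * s) ^ 2)) +
        s * (e * s / √(1 + (e * s) ^ 2)) * phi ((d + e * m) / √(1 + (e * s) ^ 2)) := by
  have hsubst := integral_comp_sub_div
    (fun v => m * (phi v * Phi ((d + e * m) + e * s * v)) +
      s * (v * phi v * Phi ((d + e * m) + e * s * v))) m hs
  rw [integral_add ((integrable_phi.mul_comp_affine continuous_Phi abs_Phi_le_one _ _).const_mul m)
    ((integrable_mul_phi.mul_comp_affine continuous_Phi abs_Phi_le_one _ _).const_mul s),
    integral_const_mul, integral_const_mul, integral_phi_mul_Phi_affine,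
    integral_mul_phi_mul_Phi_affine] at hsubst
  rw [← mul_right_inj' (inv_pos.2 hs).ne', ← integral_const_mul] at hsubst
  convert hsubst using 1
  · congr 1; ext y; field_simp; ring_nf
  · field_simp

lemma bivariate_normal_density_eq_phi_mul {lam : ℝ} (hlam : |lam| < 1) (x y : ℝ) :
    (2 * π * √(1 - lam ^ 2))⁻¹ * exp (-(x ^ 2 + y ^ 2 - 2 * lam * x * y) / (2 * (1 - lam ^ 2))) =
      phi x * ((√(1 - lam ^ 2))⁻¹ * phi ((y - lam * x) / √(1 - lam ^ 2))) := by
  have hs2 : 0 < 1 - lam ^ 2 := sub_pos.2 ((sq_lt_one_iff_abs_lt_one lam).2 hlam)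
  have hs : √(1 - lam ^ 2) ^ 2 = 1 - lam ^ 2 := Real.sq_sqrt hs2.le
  have h2π : √(2 * π) ^ 2 = 2 * π := Real.sq_sqrt (by positivity)
  have hexp : -(x ^ 2 + y ^ 2 - 2 * lam * x * y) / (2 * (1 - lam ^ 2)) =
      -x ^ 2 / 2 + -((y - lam * x) / √(1 - lam ^ 2)) ^ 2 / 2 := by
    rw [div_pow, hs]; field_simp; ring
  rw [hexp, exp_add]
  unfold phi
  field_simp
  rw [h2π]

lemma one_sub_abs_mul_le_quad_form (lam x y : ℝ) :
    (1 - |lam|) * (x ^ 2 + y ^ 2) ≤ x ^ 2 + y ^ 2 - 2 * lam * x * y := by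
  have hxy : lam * x * y ≤ |lam| * |x| * |y| := by
    simpa only [abs_mul] using le_abs_self (lam * x * y)
  have hsq : |lam| * (|x| - |y|) ^ 2 = |lam| * x ^ 2 + |lam| * y ^ 2 - 2 * (|lam| * |x| * |y|) := by
    rw [sub_sq, sq_abs, sq_abs]; ring
  nlinarith [mul_nonneg (abs_nonneg lam) (sq_nonneg (|x| - |y|))]

lemma exp_quad_form_le {lam : ℝ} (hlam : |lam| < 1) (x y : ℝ) :
    exp (-(x ^ 2 + y ^ 2 - 2 * lam * x * y) / (2 * (1 - lam ^ 2))) ≤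
      exp (-(2 * (1 + |lam|))⁻¹ * x ^ 2) * exp (-(2 * (1 + |lam|))⁻¹ * y ^ 2) := by
  have h1 : 0 < 1 - |lam| := by linarith
  have h2 : 1 - lam ^ 2 = (1 - |lam|) * (1 + |lam|) := by rw [← sq_abs]; ring
  rw [← exp_add, exp_le_exp, h2, neg_div, show
    -(2 * (1 + |lam|))⁻¹ * x ^ 2 + -(2 * (1 + |lam|))⁻¹ * y ^ 2 =
      -((1 - |lam|) * (x ^ 2 + y ^ 2) / (2 * ((1 - |lam|) * (1 + |lam|)))) by field_simp; ring,
    neg_le_neg_iff]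
  exact div_le_div_of_nonneg_right (one_sub_abs_mul_le_quad_form lam x y)
    (mul_pos two_pos (mul_pos h1 (by positivity : (0 : ℝ) < 1 + |lam|))).le

lemma esn2Pdf_eq {lam : ℝ} (hlam : |lam| < 1) (α₁ α₂ τ x y : ℝ) :
    esn2Pdf lam α₁ α₂ τ (x, y) =
      phi x / Phi τ * ((√(1 - lam ^ 2))⁻¹ * phi ((y - lam * x) / √(1 - lam ^ 2))) *
        Phi (τ * √(1 + (α₁ ^ 2 + α₂ ^ 2 + 2 * α₁ * α₂ * lam)) + α₁ * x + α₂ * y) := by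
  rw [esn2Pdf, bivariate_normal_density_eq_phi_mul hlam]
  ring

lemma continuous_esn2Pdf (lam α₁ α₂ τ : ℝ) : Continuous (esn2Pdf lam α₁ α₂ τ) := by
  have := continuous_Phi
  unfold esn2Pdf
  fun_prop

lemma esn2Pdf_nonneg (lam α₁ α₂ τ : ℝ) (z : ℝ × ℝ) : 0 ≤ esn2Pdf lam α₁ α₂ τ z :=
  div_nonneg (mul_nonneg (by positivity) (Phi_nonneg _)) (Phi_pos τ).le

lemma esn2Pdf_le {lam : ℝ} (hlam : |lam| < 1) (α₁ α₂ τ x y : ℝ) :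
    esn2Pdf lam α₁ α₂ τ (x, y) ≤ (2 * π * √(1 - lam ^ 2))⁻¹ / Phi τ *
      (exp (-(2 * (1 + |lam|))⁻¹ * x ^ 2) * exp (-(2 * (1 + |lam|))⁻¹ * y ^ 2)) := by
  have hc : 0 ≤ (2 * π * √(1 - lam ^ 2))⁻¹ / Phi τ := div_nonneg (by positivity) (Phi_pos τ).le
  calc esn2Pdf lam α₁ α₂ τ (x, y) = (2 * π * √(1 - lam ^ 2))⁻¹ / Phi τ *
        (exp (-(x ^ 2 + y ^ 2 - 2 * lam * x * y) / (2 * (1 - lam ^ 2))) *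
          Phi (τ * √(1 + (α₁ ^ 2 + α₂ ^ 2 + 2 * α₁ * α₂ * lam)) + α₁ * x + α₂ * y)) := by
        rw [esn2Pdf]; ring
    _ ≤ _ := by
        refine mul_le_mul_of_nonneg_left ?_ hc
        simpa using mul_le_mul (exp_quad_form_le hlam x y) (Phi_le_one _) (Phi_nonneg _)
          (by positivity)

lemma integrable_mul_mul_esn2Pdf {lam : ℝ} (hlam : |lam| < 1) (α₁ α₂ τ : ℝ) :
    Integrable fun z : ℝ × ℝ => z.1 * z.2 * esn2Pdf lam α₁ α₂ τ z := by
  have hg : Integrable fun x : ℝ => |x| * exp (-(2 * (1 + |lam|))⁻¹ * x ^ 2) := by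
    refine (integrable_mul_exp_neg_mul_sq (b := (2 * (1 + |lam|))⁻¹) (by positivity)).abs.congr
      (ae_of_all _ fun x => ?_)
    simp only [abs_mul, abs_of_pos (exp_pos _)]
  rw [Measure.volume_eq_prod]
  refine ((hg.mul_prod hg).const_mul ((2 * π * √(1 - lam ^ 2))⁻¹ / Phi τ)).mono'
    ((continuous_fst.mul continuous_snd).mul
      (continuous_esn2Pdf lam α₁ α₂ τ)).aestronglyMeasurable (ae_of_all _ fun ⟨x, y⟩ => ?_)
  rw [Real.norm_eq_abs, abs_mul, abs_mul, abs_of_nonneg (esn2Pdf_nonneg lam α₁ α₂ τ _)]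
  calc |x| * |y| * esn2Pdf lam α₁ α₂ τ (x, y) ≤ |x| * |y| * ((2 * π * √(1 - lam ^ 2))⁻¹ /
      Phi τ * (exp (-(2 * (1 + |lam|))⁻¹ * x ^ 2) * exp (-(2 * (1 + |lam|))⁻¹ * y ^ 2))) := by
        gcongr; exact esn2Pdf_le hlam α₁ α₂ τ x y
    _ = _ := by ring

lemma integral_mul_mul_esn2Pdf_slice {lam : ℝ} (hlam : |lam| < 1) (α₁ α₂ τ x : ℝ) :
    ∫ y, x * y * esn2Pdf lam α₁ α₂ τ (x, y) =
      (Phi τ)⁻¹ * (x * phi x *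
        (lam * x * Phi (τ * √(1 + (α₁ ^ 2 + α₂ ^ 2 + 2 * α₁ * α₂ * lam)) /
            √(1 + (α₂ * √(1 - lam ^ 2)) ^ 2) +
          (α₁ + lam * α₂) / √(1 + (α₂ * √(1 - lam ^ 2)) ^ 2) * x) +
        √(1 - lam ^ 2) * (α₂ * √(1 - lam ^ 2) / √(1 + (α₂ * √(1 - lam ^ 2)) ^ 2)) *
          phi (τ * √(1 + (α₁ ^ 2 + α₂ ^ 2 + 2 * α₁ * α₂ * lam)) /
            √(1 + (α₂ * √(1 - lam ^ 2)) ^ 2) +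
          (α₁ + lam * α₂) / √(1 + (α₂ * √(1 - lam ^ 2)) ^ 2) * x))) := by
  have hs : 0 < √(1 - lam ^ 2) :=
    Real.sqrt_pos.2 (sub_pos.2 ((sq_lt_one_iff_abs_lt_one lam).2 hlam))
  simp_rw [esn2Pdf_eq hlam, show ∀ y, x * y * (phi x / Phi τ * ((√(1 - lam ^ 2))⁻¹ *
      phi ((y - lam * x) / √(1 - lam ^ 2))) *
        Phi (τ * √(1 + (α₁ ^ 2 + α₂ ^ 2 + 2 * α₁ * α₂ * lam)) + α₁ * x + α₂ * y)) =
      x * phi x / Phi τ * (y * ((√(1 - lam ^ 2))⁻¹ * phi ((y - lam * x) / √(1 - lam ^ 2))) *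
        Phi ((τ * √(1 + (α₁ ^ 2 + α₂ ^ 2 + 2 * α₁ * α₂ * lam)) + α₁ * x) + α₂ * y)) from
      fun y => by ring]
  have harg : ∀ c k : ℝ, (c + α₁ * x + α₂ * (lam * x)) / k = c / k + (α₁ + lam * α₂) / k * x :=
    fun _ _ => by ring
  rw [integral_const_mul, integral_mul_scaled_phi_mul_Phi_affine _ _ _ hs, harg]
  ring

theorem esn2_cross_moment (lam α₁ α₂ τ : ℝ) (hlam : |lam| < 1) :
    ∫ z : ℝ × ℝ, z.1 * z.2 * esn2Pdf lam α₁ α₂ τ z =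
      lam + ((α₁ + lam * α₂) / Real.sqrt (1 + (α₁ ^ 2 + α₂ ^ 2 + 2 * α₁ * α₂ * lam))) *
          ((α₂ + lam * α₁) / Real.sqrt (1 + (α₁ ^ 2 + α₂ ^ 2 + 2 * α₁ * α₂ * lam))) *
          (zeta2 τ + (zeta1 τ) ^ 2) := by
  rw [Measure.volume_eq_prod, integral_prod _ (integrable_mul_mul_esn2Pdf hlam α₁ α₂ τ)]
  simp_rw [integral_mul_mul_esn2Pdf_slice hlam]
  rw [integral_const_mul, integral_mul_phi_mul_affine_combination]
  have hs2 : 0 < 1 - lam ^ 2 := sub_pos.2 ((sq_lt_one_iff_abs_lt_one lam).2 hlam)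
  have hR2 : 0 < 1 + (α₁ ^ 2 + α₂ ^ 2 + 2 * α₁ * α₂ * lam) := by
    nlinarith [mul_nonneg hs2.le (sq_nonneg α₂), sq_nonneg (α₁ + lam * α₂)]
  set s := √(1 - lam ^ 2)
  set R := √(1 + (α₁ ^ 2 + α₂ ^ 2 + 2 * α₁ * α₂ * lam))
  set k := √(1 + (α₂ * s) ^ 2)
  have hs_sq : s ^ 2 = 1 - lam ^ 2 := Real.sq_sqrt hs2.le
  have hR_pos : 0 < R := Real.sqrt_pos.2 hR2
  have hk_pos : 0 < k := Real.sqrt_pos.2 (by positivity)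
  have hK : R ^ 2 = k ^ 2 + (α₁ + lam * α₂) ^ 2 := by
    rw [Real.sq_sqrt hR2.le, Real.sq_sqrt (by positivity), mul_pow, hs_sq]; ring
  rw [sqrt_one_add_div_sq hk_pos hR_pos.le hK, show τ * R / k / (R / k) = τ by field_simp]
  clear_value s R k
  unfold zeta2 zeta1
  have hΦ := Phi_pos τ
  generalize phi τ = P
  generalize Phi τ = Q at hΦ ⊢
  field_simp
  linear_combination -(Q * τ * P * α₂ * (α₁ + lam * α₂)) * hs_sq
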